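/- arXiv:2509.07750 — 9 statements merged into one kernel-verified Lean document; each statement's English description precedes it below -/
import Mathlib

section
/- Let n be odd, let π be an n-cycle in the symmetric group Sₙ, and let A = {α ∈ Sₙ : α(1) = 1}. Then {(α, απ) : α ∈ A} is an S₂-set in Sₙ × Sₙ of size (n−1)!. -/
/-- The set `{(α, απ) : α ∈ Sₙ, α(1) = 1}` in `Sₙ × Sₙ` (with the fixed point
taken to be `⟨0, _⟩ : Fin n`). -/
def fixPairSet (n : ℕ) (hpos : 0 < n) (π : Equiv.Perm (Fin n)) :
    Set (Equiv.Perm (Fin n) × Equiv.Perm (Fin n)) :=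
  {p | ∃ α : Equiv.Perm (Fin n), α ⟨0, hpos⟩ = ⟨0, hpos⟩ ∧ p = (α, α * π)}

/-! The point stabilizer `A` is a subgroup meeting the centralizer of the full cycle `π`
trivially, since a permutation commuting with `π` and fixing one point fixes the whole orbit
of `π`. For any subgroup `H` with `H ∩ C(π) = 1`, an equation
`(α, απ)(β, βπ) = (γ, γπ)(δ, δπ)` with `α, γ ∈ H` forces `γ⁻¹α ∈ H` to commute with `π`,
hence `α = γ` and then `β = δ`. The count is the orbit-stabilizer theorem. -/

open Equiv Equiv.Perm MulAction

def IsS2Set {M : Type*} [Mul M] (B : Set M) : Prop :=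
  ∀ p q r s : M, p ∈ B → q ∈ B → r ∈ B → s ∈ B → p * q = r * s → p = r ∧ q = s

theorem commute_inv_mul_of_mul_eq_of_mul_mul_eq {G : Type*} [Group G] {π α β γ δ : G}
    (h₁ : α * β = γ * δ) (h₂ : α * π * β = γ * π * δ) : Commute (γ⁻¹ * α) π := by
  obtain rfl : δ = γ⁻¹ * α * β := by rw [mul_assoc, h₁, inv_mul_cancel_left]
  have h : α * π = γ * π * (γ⁻¹ * α) :=
    mul_right_cancel (b := β) (by simpa only [mul_assoc] using h₂)
  show γ⁻¹ * α * π = π * (γ⁻¹ * α)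
  rw [mul_assoc, h]
  group

theorem isS2Set_image_prodMk_mul {G : Type*} [Group G] (H : Subgroup G) (π : G)
    (hH : ∀ σ ∈ H, Commute σ π → σ = 1) :
    IsS2Set ((fun α => (α, α * π)) '' H) := by
  rintro _ _ _ _ ⟨α, hα, rfl⟩ ⟨β, -, rfl⟩ ⟨γ, hγ, rfl⟩ ⟨δ, -, rfl⟩ heq
  simp only [Prod.mk_mul_mk, Prod.mk.injEq] at heq
  obtain ⟨h₁, h₂⟩ := heq
  have h₂' : α * π * β = γ * π * δ :=
    mul_right_cancel (b := π) (by simpa only [mul_assoc] using h₂)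
  have hαγ : α = γ := (inv_mul_eq_one.mp
    (hH _ (H.mul_mem (H.inv_mem hγ) hα)
      (commute_inv_mul_of_mul_eq_of_mul_mul_eq h₁ h₂'))).symm
  subst hαγ
  obtain rfl : β = δ := mul_left_cancel h₁
  exact ⟨rfl, rfl⟩

theorem Equiv.Perm.SameCycle.apply_eq_self_of_commute {α : Type*} {π σ : Perm α} {x y : α}
    (hxy : π.SameCycle x y) (hσπ : Commute σ π) (hσx : σ x = x) : σ y = y := by
  obtain ⟨i, rfl⟩ := hxy
  rw [← mul_apply, (hσπ.zpow_right i).eq, mul_apply, hσx]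

theorem Equiv.Perm.IsCycle.eq_one_of_commute_of_apply_eq_self {α : Type*} [Fintype α]
    [DecidableEq α] {π σ : Perm α} (hπ : π.IsCycle) (hsupp : π.support = Finset.univ)
    (hσπ : Commute σ π) {x : α} (hσx : σ x = x) : σ = 1 := by
  have hmove (y : α) : π y ≠ y := mem_support.mp (hsupp ▸ Finset.mem_univ y)
  ext y
  exact (hπ.sameCycle (hmove x) (hmove y)).apply_eq_self_of_commute hσπ hσx

theorem Equiv.Perm.nat_card_stabilizer {α : Type*} [Finite α] (a : α) :
    Nat.card (stabilizer (Perm α) a) = (Nat.card α - 1).factorial := by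
  have h := (stabilizer (Perm α) a).card_mul_index
  rw [index_stabilizer_of_transitive, Nat.card_perm] at h
  have : Nonempty α := ⟨a⟩
  obtain ⟨m, hm⟩ := Nat.exists_eq_add_one.mpr (Nat.card_pos (α := α))
  rw [hm, Nat.factorial_succ, mul_comm] at h
  rw [hm, Nat.add_sub_cancel]
  exact Nat.eq_of_mul_eq_mul_left m.succ_pos h

theorem fixPairSet_eq_image (n : ℕ) (hpos : 0 < n) (π : Perm (Fin n)) :
    fixPairSet n hpos π = (fun α => (α, α * π)) '' stabilizer (Perm (Fin n)) (⟨0, hpos⟩ : Fin n) := by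
  ext p
  simp [fixPairSet, eq_comm]

theorem stmt_3_general (n : ℕ) (hpos : 0 < n) (π : Equiv.Perm (Fin n))
    (hcyc : π.IsCycle) (hsupp : π.support = Finset.univ) :
    (∀ p q r s : Equiv.Perm (Fin n) × Equiv.Perm (Fin n),
        p ∈ fixPairSet n hpos π → q ∈ fixPairSet n hpos π →
        r ∈ fixPairSet n hpos π → s ∈ fixPairSet n hpos π →
        p * q = r * s → p = r ∧ q = s) ∧
    (fixPairSet n hpos π).ncard = Nat.factorial (n - 1) := by
  rw [fixPairSet_eq_image]
  refine ⟨isS2Set_image_prodMk_mul _ π fun σ hσ hσπ =>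
    hcyc.eq_one_of_commute_of_apply_eq_self hsupp hσπ hσ, ?_⟩
  rw [Set.ncard_image_of_injective _ fun _ _ h => congrArg Prod.fst h,
    ← Nat.card_coe_set_eq, SetLike.coe_sort_coe, nat_card_stabilizer, Nat.card_fin]

/-- For odd `n` and an `n`-cycle `π ∈ Sₙ`, the set `{(α, απ) : α(1) = 1}` is an
`S₂`-set in `Sₙ × Sₙ` of size `(n-1)!`. -/
theorem stmt_3 (n : ℕ) (hn : Odd n) (hpos : 0 < n) (π : Equiv.Perm (Fin n))
    (hcyc : π.IsCycle) (hsupp : π.support = Finset.univ) :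
    (∀ p q r s : Equiv.Perm (Fin n) × Equiv.Perm (Fin n),
        p ∈ fixPairSet n hpos π → q ∈ fixPairSet n hpos π →
        r ∈ fixPairSet n hpos π → s ∈ fixPairSet n hpos π →
        p * q = r * s → p = r ∧ q = s) ∧
    (fixPairSet n hpos π).ncard = Nat.factorial (n - 1) :=
  stmt_3_general n hpos π hcyc hsupp
end

section
/- Suppose a finite group Γ has a conjugacy class of size m. Then Γ × Γ contains an S₂[g]-set of size m, where g = |Γ|/m. -/
/-!
Take `B = {(c, c a) : c conjugate to a}`. If `(c, c a) (d, d a) = μ`, then `d = c⁻¹ μ₁` and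
`c a c⁻¹ = μ₂ a⁻¹ μ₁⁻¹`, so a representation of `μ` is determined by `c`, which lies in a fibre of
`z ↦ z a z⁻¹`. Such a fibre is a coset of the centralizer of `a`, whose order is `|Γ| / m` by the
orbit-stabilizer theorem.
-/

namespace MulAction

variable {G X : Type*} [Group G] [MulAction G X]

theorem ncard_setOf_smul_eq_le_card_stabilizer [Finite G] (x y : X) :
    {g : G | g • x = y}.ncard ≤ Nat.card (stabilizer G x) := by
  rcases Set.eq_empty_or_nonempty {g : G | g • x = y} with h | ⟨g₀, hg₀⟩
  · simp [h]
  rw [← Nat.card_coe_set_eq]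
  refine Set.ncard_le_ncard_of_injOn (g₀⁻¹ * ·) (fun g hg => ?_) fun _ _ _ _ => mul_left_cancel
  simp only [Set.mem_ofPred_eq] at hg hg₀
  simp [mem_stabilizer_iff, mul_smul, hg, ← hg₀]

theorem card_stabilizer_eq_card_div_ncard_orbit [Finite G] (x : X) :
    Nat.card (stabilizer G x) = Nat.card G / (orbit G x).ncard := by
  have horbit : 0 < (orbit G x).ncard :=
    Set.ncard_pos (Set.finite_range _) |>.mpr ⟨x, mem_orbit_self x⟩
  rw [← index_stabilizer, ← (stabilizer G x).card_mul_index,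
    Nat.mul_div_cancel _ (index_stabilizer G x ▸ horbit)]

end MulAction

theorem ncard_setOf_conj_eq_le {Γ : Type*} [Group Γ] [Finite Γ] (a b : Γ) :
    {z : Γ | z * a * z⁻¹ = b}.ncard ≤ Nat.card Γ / {x : Γ | IsConj a x}.ncard := by
  have hfiber :
      {z : Γ | z * a * z⁻¹ = b} = ConjAct.toConjAct ⁻¹' {g : ConjAct Γ | g • a = b} := by
    ext z; simp [ConjAct.toConjAct_smul]
  have horbit : MulAction.orbit (ConjAct Γ) a = {x : Γ | IsConj a x} := by
    ext x; exact ConjAct.mem_orbit_conjAct.trans isConj_comm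
  have : Finite (ConjAct Γ) := .of_equiv Γ ConjAct.toConjAct.toEquiv
  calc {z : Γ | z * a * z⁻¹ = b}.ncard
      = {g : ConjAct Γ | g • a = b}.ncard := by
        rw [hfiber, Set.ncard_preimage_of_injective_subset_range ConjAct.toConjAct.injective
          (by simp [ConjAct.toConjAct.surjective.range_eq])]
    _ ≤ Nat.card (MulAction.stabilizer (ConjAct Γ) a) :=
        MulAction.ncard_setOf_smul_eq_le_card_stabilizer a b
    _ = Nat.card Γ / {x : Γ | IsConj a x}.ncard := by
        rw [MulAction.card_stabilizer_eq_card_div_ncard_orbit, horbit,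
          Nat.card_congr ConjAct.toConjAct.toEquiv.symm]

def mulRepresentations {M : Type*} [Mul M] (B : Set M) (μ : M) : Set (M × M) :=
  {q | q.1 ∈ B ∧ q.2 ∈ B ∧ q.1 * q.2 = μ}

theorem ncard_mulRepresentations_graph_le {Γ : Type*} [Group Γ] [Finite Γ] (a : Γ) (S : Set Γ)
    (μ : Γ × Γ) :
    (mulRepresentations ((fun c => (c, c * a)) '' S) μ).ncard ≤
      {z : Γ | z * a * z⁻¹ = μ.2 * a⁻¹ * μ.1⁻¹}.ncard := by
  refine Set.ncard_le_ncard_of_injOn (fun q => q.1.1) ?_ ?_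
  · rintro ⟨_, _⟩ ⟨⟨c, -, rfl⟩, ⟨d, -, rfl⟩, hprod⟩
    rw [← hprod]
    simp only [Prod.fst_mul, Prod.snd_mul, Set.mem_ofPred_eq]
    group
  · rintro ⟨_, q₂⟩ ⟨⟨c, -, rfl⟩, -, hprod⟩ ⟨_, q₂'⟩ ⟨⟨c', -, rfl⟩, -, hprod'⟩ (rfl : c = c')
    rw [show q₂ = q₂' from mul_left_cancel (hprod.trans hprod'.symm)]

/-- If a finite group `Γ` has a conjugacy class of size `m`, then `Γ × Γ`
contains an `S₂[g]`-set of size `m`, where `g = |Γ|/m`: a set `B` of size `m`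
such that for every `μ ∈ Γ × Γ` there are at most `g` ordered pairs of elements
of `B` whose product is `μ`. -/
theorem stmt_5 {Γ : Type*} [Group Γ] [Fintype Γ] (a : Γ) (m : ℕ)
    (hm : {x : Γ | IsConj a x}.ncard = m) :
    ∃ B : Set (Γ × Γ), B.ncard = m ∧
      ∀ μ : Γ × Γ,
        {q : (Γ × Γ) × (Γ × Γ) | q.1 ∈ B ∧ q.2 ∈ B ∧ q.1 * q.2 = μ}.ncard ≤
          Fintype.card Γ / m := by
  refine ⟨(fun c => (c, c * a)) '' {x : Γ | IsConj a x}, ?_, fun μ => ?_⟩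
  · rw [Set.ncard_image_of_injective _ (fun x y h => (Prod.ext_iff.mp h).1), hm]
  · rw [← Nat.card_eq_fintype_card, ← hm]
    exact (ncard_mulRepresentations_graph_le a _ μ).trans (ncard_setOf_conj_eq_le a _)
end

section
/- If a finite group Γ contains an abelian subgroup of index h, then for any k ≥ 3, every S_k'-set in Γ has size at most h(k−1). -/
/-!
By pigeonhole, some left coset `gH` contains `k` distinct elements `c₀, …, c_{k-1}` of `A`.
Writing `cᵢ = g dᵢ` with `dᵢ ∈ H`, the product `∏ cᵢ c_{i+2}⁻¹` is the conjugate by `g` of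
`∏ dᵢ d_{i+2}⁻¹`, which is `1` because `H` is abelian. Taking `αᵢ = cᵢ` and `βᵢ = c_{i+2}`,
neither `αᵢ = βᵢ` nor `βᵢ = α_{i+1}` can hold when `k ≥ 3`, so `A` is not an `S_k'`-set.
-/

/-- `A` is an `S_k'`-set in a group `Γ`: whenever
`α₁β₁⁻¹α₂β₂⁻¹⋯α_kβ_k⁻¹ = 1` with all `αᵢ, βᵢ ∈ A`, there is an index `i`
such that `αᵢ = βᵢ` or `βᵢ = α_{i+1}` (indices cyclic mod `k`). -/
def IsSkSet' {Γ : Type*} [Group Γ] (k : ℕ) (A : Set Γ) : Prop :=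
  ∀ a b : Fin k → Γ, (∀ i, a i ∈ A) → (∀ i, b i ∈ A) →
    (List.ofFn (fun i => a i * (b i)⁻¹)).prod = 1 →
    ∃ i : Fin k, a i = b i ∨ b i = a (finRotate k i)

open Function

theorem Finset.prod_mul_inv_comp_perm {G ι : Type*} [CommGroup G] [Fintype ι]
    (d : ι → G) (σ : Equiv.Perm ι) : ∏ i, d i * (d (σ i))⁻¹ = 1 := by
  rw [Finset.prod_mul_distrib, Finset.prod_inv_distrib, Equiv.prod_comp σ, mul_inv_cancel]

open scoped IsMulCommutative in
theorem Subgroup.list_prod_ofFn_mul_inv_comp_perm {Γ : Type*} [Group Γ] (H : Subgroup Γ)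
    [IsMulCommutative H] {k : ℕ} (g : Γ) (c : Fin k → Γ) (hc : ∀ i, g⁻¹ * c i ∈ H)
    (σ : Equiv.Perm (Fin k)) : (List.ofFn fun i => c i * (c (σ i))⁻¹).prod = 1 := by
  let d : Fin k → H := fun i => ⟨g⁻¹ * c i, hc i⟩
  let F : H →* Γ := (MulAut.conj g).toMonoidHom.comp H.subtype
  have hF : (fun i => c i * (c (σ i))⁻¹) = F ∘ fun i => d i * (d (σ i))⁻¹ := by
    funext i
    simp [F, d, MulAut.conj_apply, mul_assoc]
  rw [hF, ← List.map_ofFn, ← map_list_prod, List.prod_ofFn, Finset.prod_mul_inv_comp_perm,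
    map_one]

theorem Subgroup.exists_injective_of_index_mul_lt_ncard {Γ : Type*} [Group Γ] [Finite Γ]
    (H : Subgroup Γ) {A : Set Γ} {n : ℕ} (hA : H.index * n < A.ncard) :
    ∃ (g : Γ) (c : Fin (n + 1) → Γ), Injective c ∧ (∀ i, c i ∈ A) ∧ ∀ i, g⁻¹ * c i ∈ H := by
  classical
  have := Fintype.ofFinite Γ
  have := Fintype.ofFinite (Γ ⧸ H)
  rw [Subgroup.index, Nat.card_eq_fintype_card, ← Nat.card_coe_set_eq,
    Nat.card_eq_fintype_card] at hA
  obtain ⟨y, hy⟩ := Fintype.exists_lt_card_fiber_of_mul_lt_card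
    (fun a : A => (a : Γ ⧸ H)) hA
  let e : Fin (n + 1) ↪ A :=
    (Fin.castLEEmb hy).trans ((Finset.equivFin _).symm.toEmbedding.trans (Embedding.subtype _))
  refine ⟨y.out, fun i => e i, Subtype.val_injective.comp e.injective, fun i => (e i).2,
    fun i => ?_⟩
  have hyi : ((e i : Γ) : Γ ⧸ H) = y :=
    (Finset.mem_filter.mp ((Finset.equivFin _).symm (Fin.castLE hy i)).2).2
  rw [← QuotientGroup.eq, QuotientGroup.out_eq', hyi]

theorem Fin.add_two_ne {k : ℕ} [NeZero k] (hk : 3 ≤ k) (i : Fin k) :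
    i + 2 ≠ i ∧ i + 2 ≠ i + 1 := by
  have h2 : (2 : Fin k) ≠ 0 := by simp [Fin.ext_iff, Nat.mod_eq_of_lt (by omega : 2 < k)]
  have h21 : (2 : Fin k) ≠ 1 := by
    simp [Fin.ext_iff, Nat.mod_eq_of_lt (by omega : 2 < k), Nat.mod_eq_of_lt (by omega : 1 < k)]
  exact ⟨fun h => h2 (by simpa using h), fun h => h21 (add_left_cancel h)⟩

/-- If a finite group `Γ` contains an abelian subgroup of index `h`, then for
`k ≥ 3`, every `S_k'`-set in `Γ` has size at most `h(k−1)`. -/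
theorem stmt_8 {Γ : Type*} [Group Γ] [Fintype Γ] (H : Subgroup Γ) (h k : ℕ)
    (hab : ∀ x ∈ H, ∀ y ∈ H, x * y = y * x) (hidx : H.index = h)
    (hk : 3 ≤ k) (A : Set Γ) (hA : IsSkSet' k A) :
    A.ncard ≤ h * (k - 1) := by
  by_contra! hlt
  obtain ⟨m, rfl⟩ : ∃ m, k = m + 3 := ⟨k - 3, by omega⟩
  have : IsMulCommutative H := ⟨⟨fun a b => Subtype.ext (hab _ a.2 _ b.2)⟩⟩
  obtain ⟨g, c, hinj, hcA, hcH⟩ :=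
    H.exists_injective_of_index_mul_lt_ncard (n := m + 2) (by simpa [hidx] using hlt)
  obtain ⟨i, hi | hi⟩ := hA c (fun i => c (i + 2)) hcA (fun i => hcA _)
    (H.list_prod_ofFn_mul_inv_comp_perm g c hcH (Equiv.addRight 2))
  · exact (Fin.add_two_ne hk i).1 (hinj hi).symm
  · rw [finRotate_apply] at hi
    exact (Fin.add_two_ne hk i).2 (hinj hi)
end

section
/- Let Γ be a finite group with |Γ| > 1, let m_k(Γ) be the number of integers ℓ with 2 ≤ ℓ ≤ k such that Γ contains an element of order ℓ, and let n_k(Γ) be the number of elements of Γ of order greater than k. Then every S_k-set in Γ has size at most m_k(Γ) + n_k(Γ). -/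
/-- `A` is an `S_k`-set in a group `Γ`: whenever two ordered products of `k`
elements of `A` agree, the tuples agree. -/
def IsSkSet {Γ : Type*} [Group Γ] (k : ℕ) (A : Set Γ) : Prop :=
  ∀ a b : Fin k → Γ, (∀ i, a i ∈ A) → (∀ i, b i ∈ A) →
    (List.ofFn a).prod = (List.ofFn b).prod → a = b

/-!
Two elements of `A` of the same order `ℓ ≤ k` have the same product `1` as constant `ℓ`-tuples,
so the `S_ℓ` property forces them to be equal: on the elements of order at most `k`, the order
map is injective. If `1 ∉ A` these orders lie in `[2, k]`, and the elements of larger order are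
counted by `n_k`. If `1 ∈ A`, then `b * 1 = 1 * b` and the `S_2` property give `A = {1}`, while
any element `≠ 1` of the nontrivial group `Γ` contributes to `m_k` or to `n_k`.
-/

theorem finite_setOf_orderOf_between (Γ : Type*) [Group Γ] (k : ℕ) :
    {ℓ : ℕ | 2 ≤ ℓ ∧ ℓ ≤ k ∧ ∃ x : Γ, orderOf x = ℓ}.Finite :=
  (Set.finite_Icc 2 k).subset fun _ hℓ => ⟨hℓ.1, hℓ.2.1⟩

namespace IsSkSet

variable {Γ : Type*} [Group Γ] {k : ℕ} {A : Set Γ}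

theorem mono (hA : IsSkSet k A) {ℓ : ℕ} (hℓ : ℓ ≤ k) : IsSkSet ℓ A := by
  obtain ⟨d, rfl⟩ := Nat.exists_eq_add_of_le hℓ
  intro a b ha hb hab
  rcases A.eq_empty_or_nonempty with rfl | ⟨c, hc⟩
  · funext i
    exact absurd (ha i) (Set.notMem_empty _)
  have hpad := hA (Fin.append a fun _ : Fin d => c) (Fin.append b fun _ : Fin d => c)
    (Fin.addCases (fun i => by simpa using ha i) fun _ => by simpa using hc)
    (Fin.addCases (fun i => by simpa using hb i) fun _ => by simpa using hc)
    (by simp only [List.ofFn_fin_append, List.prod_append, hab])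
  funext i
  simpa using congrFun hpad (Fin.castAdd d i)

theorem subset_one_of_one_mem (hA : IsSkSet k A) (hk : 2 ≤ k) (h1 : (1 : Γ) ∈ A) :
    A ⊆ {1} := by
  intro b hb
  have hswap := hA.mono hk ![b, 1] ![1, b]
    (fun i => by fin_cases i <;> assumption) (fun i => by fin_cases i <;> assumption)
    (by simp)
  simpa using congrFun hswap 0

theorem injOn_orderOf [Finite Γ] (hA : IsSkSet k A) :
    Set.InjOn orderOf {x ∈ A | orderOf x ≤ k} := by
  rintro a ⟨ha, hak⟩ b ⟨hb, -⟩ hab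
  have hconst := hA.mono hak (fun _ => a) (fun _ => b) (fun _ => ha) (fun _ => hb)
    (by simp only [List.ofFn_const, List.prod_replicate]
        rw [pow_orderOf_eq_one, hab, pow_orderOf_eq_one])
  exact congrFun hconst ⟨0, orderOf_pos a⟩

theorem ncard_le_of_one_notMem [Finite Γ] (hA : IsSkSet k A) (h1 : (1 : Γ) ∉ A) :
    A.ncard ≤ {ℓ : ℕ | 2 ≤ ℓ ∧ ℓ ≤ k ∧ ∃ x : Γ, orderOf x = ℓ}.ncard +
      {x : Γ | k < orderOf x}.ncard := by
  have hsplit : A ⊆ {x ∈ A | orderOf x ≤ k} ∪ {x : Γ | k < orderOf x} := fun x hx =>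
    (le_or_gt (orderOf x) k).imp (fun h => ⟨hx, h⟩) id
  have hmaps : Set.MapsTo orderOf {x ∈ A | orderOf x ≤ k}
      {ℓ : ℕ | 2 ≤ ℓ ∧ ℓ ≤ k ∧ ∃ x : Γ, orderOf x = ℓ} := fun x ⟨hx, hxk⟩ =>
    ⟨(orderOf_pos x).nat_succ_le.lt_of_ne' fun h => h1 (orderOf_eq_one_iff.mp h ▸ hx),
      hxk, x, rfl⟩
  calc A.ncard ≤ {x ∈ A | orderOf x ≤ k}.ncard + {x : Γ | k < orderOf x}.ncard :=
        (Set.ncard_le_ncard hsplit).trans (Set.ncard_union_le _ _)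
    _ ≤ _ := Nat.add_le_add_right (Set.ncard_le_ncard_of_injOn orderOf hmaps hA.injOn_orderOf
        (finite_setOf_orderOf_between Γ k)) _

end IsSkSet

theorem one_le_ncard_orders {Γ : Type*} [Group Γ] [Finite Γ] [Nontrivial Γ] (k : ℕ) :
    1 ≤ {ℓ : ℕ | 2 ≤ ℓ ∧ ℓ ≤ k ∧ ∃ x : Γ, orderOf x = ℓ}.ncard +
      {x : Γ | k < orderOf x}.ncard := by
  obtain ⟨x, hx⟩ := exists_ne (1 : Γ)
  have hx2 : 2 ≤ orderOf x :=
    (orderOf_pos x).nat_succ_le.lt_of_ne' fun h => hx (orderOf_eq_one_iff.mp h)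
  rcases le_or_gt (orderOf x) k with hxk | hxk
  · have := (Set.ncard_pos (finite_setOf_orderOf_between Γ k)).mpr ⟨_, hx2, hxk, x, rfl⟩
    omega
  · have := (Set.ncard_pos (Set.toFinite {x : Γ | k < orderOf x})).mpr ⟨x, hxk⟩
    omega

/-- Let `Γ` be a finite group with `|Γ| > 1` and `k ≥ 2`. If `m_k(Γ)` is the
number of `ℓ` with `2 ≤ ℓ ≤ k` such that `Γ` has an element of order `ℓ`, and
`n_k(Γ)` is the number of elements of order greater than `k`, then every
`S_k`-set in `Γ` has size at most `m_k(Γ) + n_k(Γ)`. -/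
theorem stmt_9 {Γ : Type*} [Group Γ] [Fintype Γ] (hΓ : 1 < Fintype.card Γ)
    (k : ℕ) (hk : 2 ≤ k) (A : Set Γ) (hA : IsSkSet k A) :
    A.ncard ≤ {ℓ : ℕ | 2 ≤ ℓ ∧ ℓ ≤ k ∧ ∃ x : Γ, orderOf x = ℓ}.ncard +
      {x : Γ | k < orderOf x}.ncard := by
  by_cases h1 : (1 : Γ) ∈ A
  · have : Nontrivial Γ := Fintype.one_lt_card_iff_nontrivial.mp hΓ
    calc A.ncard ≤ ({1} : Set Γ).ncard := Set.ncard_le_ncard (hA.subset_one_of_one_mem hk h1)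
      _ = 1 := Set.ncard_singleton 1
      _ ≤ _ := one_le_ncard_orders k
  · exact hA.ncard_le_of_one_notMem h1
end

section
/- Suppose a finite group Γ has an abelian subgroup H of index 2, and A ⊆ Γ is an S_k-set (k ≥ 2). Then (|A| − 1)^k ≤ |Γ|/2. -/
namespace Subgroup

variable {Γ : Type*} [Group Γ] {H : Subgroup Γ}

theorem list_prod_mem_iff_even_length_of_index_two (hidx : H.index = 2) {l : List Γ}
    (hl : ∀ g ∈ l, g ∉ H) : l.prod ∈ H ↔ Even l.length := by
  induction l with
  | nil => simp
  | cons a l ih =>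
    rw [List.prod_cons, mul_mem_iff_of_index_two hidx, List.length_cons, Nat.even_add_one,
      ih fun g hg => hl g (List.mem_cons_of_mem a hg)]
    simp [hl a List.mem_cons_self]

theorem inv_mul_ofFn_prod_mem_of_index_two (hidx : H.index = 2) {k : ℕ} {x y : Fin k → Γ}
    (hx : ∀ i, x i ∉ H) (hy : ∀ i, y i ∉ H) :
    (List.ofFn x).prod⁻¹ * (List.ofFn y).prod ∈ H := by
  have parity {z : Fin k → Γ} (hz : ∀ i, z i ∉ H) : (List.ofFn z).prod ∈ H ↔ Even k := by
    rw [list_prod_mem_iff_even_length_of_index_two hidx, List.length_ofFn]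
    simpa [List.mem_ofFn] using hz
  rw [mul_mem_iff_of_index_two hidx, inv_mem_iff, parity hx, parity hy]

end Subgroup

namespace IsSkSet

variable {Γ : Type*} [Group Γ] {k : ℕ} {A : Set Γ}

theorem mono_s13 {B : Set Γ} (hA : IsSkSet k A) (hBA : B ⊆ A) : IsSkSet k B :=
  fun a b ha hb => hA a b (fun i => hBA (ha i)) (fun i => hBA (hb i))

theorem eq_of_commute (hA : IsSkSet k A) (hk : 2 ≤ k) {a b : Γ} (ha : a ∈ A) (hb : b ∈ A)
    (hab : Commute a b) : a = b := by
  obtain ⟨m, rfl⟩ : ∃ m, k = m + 2 := ⟨k - 2, by omega⟩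
  let t (c d : Γ) : Fin (m + 2) → Γ := Fin.cons c (Fin.cons d fun _ => b)
  have mem {c d : Γ} (hc : c ∈ A) (hd : d ∈ A) : ∀ i, t c d i ∈ A :=
    Fin.cases hc (Fin.cases hd fun _ => hb)
  have := hA _ _ (mem ha hb) (mem hb ha) <| by
    simp only [t, List.ofFn_succ, Fin.cons_zero, Fin.cons_succ, List.prod_cons, ← mul_assoc,
      hab.eq]
  simpa [t] using congrFun this 0

theorem subsingleton_inter (hA : IsSkSet k A) (hk : 2 ≤ k) {H : Set Γ}
    (hH : ∀ x ∈ H, ∀ y ∈ H, x * y = y * x) : (A ∩ H).Subsingleton := by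
  rintro a ⟨haA, haH⟩ b ⟨hbA, hbH⟩
  exact hA.eq_of_commute hk haA hbA (hH a haH b hbH)

theorem injective_ofFn_prod (hA : IsSkSet k A) :
    Function.Injective fun x : Fin k → A => (List.ofFn fun i => (x i : Γ)).prod :=
  fun x y hxy => funext fun i => Subtype.ext <| congrFun (hA _ _ (fun i => (x i).2)
    (fun i => (y i).2) hxy) i

theorem ncard_pow_le_card_of_index_two [Finite Γ] (hA : IsSkSet k A) {H : Subgroup Γ}
    (hidx : H.index = 2) (hAH : ∀ a ∈ A, a ∉ H) : A.ncard ^ k ≤ Nat.card H := by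
  rcases A.eq_empty_or_nonempty with rfl | ⟨a₀, ha₀⟩
  · rcases k with _ | k
    · simp only [pow_zero]
      exact Nat.card_pos
    · simp
  -- Translating by the product `a₀ ^ k` moves all products of `k`-tuples from `A` into `H`.
  let c : Γ := (List.ofFn fun _ : Fin k => a₀).prod
  have mem (x : Fin k → A) : c⁻¹ * (List.ofFn fun i => (x i : Γ)).prod ∈ H :=
    Subgroup.inv_mul_ofFn_prod_mem_of_index_two hidx (fun _ => hAH a₀ ha₀)
      (fun i => hAH _ (x i).2)
  have hinj : Function.Injective fun x : Fin k → A => (⟨_, mem x⟩ : H) :=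
    fun x y hxy => hA.injective_ofFn_prod (mul_left_cancel (congrArg Subtype.val hxy))
  simpa [Nat.card_fun] using Nat.card_le_card_of_injective _ hinj

end IsSkSet

/-- If a finite group `Γ` has an abelian subgroup `H` of index 2 and `A` is an
`S_k`-set in `Γ` (`k ≥ 2`), then `(|A| − 1)^k ≤ |Γ|/2`. -/
theorem stmt_13 {Γ : Type*} [Group Γ] [Fintype Γ] (H : Subgroup Γ)
    (hab : ∀ x ∈ H, ∀ y ∈ H, x * y = y * x) (hidx : H.index = 2)
    (k : ℕ) (hk : 2 ≤ k) (A : Set Γ) (hA : IsSkSet k A) :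
    (A.ncard - 1) ^ k ≤ Fintype.card Γ / 2 := by
  have hsplit : (A ∩ H).ncard + (A \ H).ncard = A.ncard :=
    Set.ncard_inter_add_ncard_sdiff_eq_ncard A H
  have hinter := Set.ncard_le_one_iff_subsingleton.2 (hA.subsingleton_inter hk hab)
  have houter : (A \ H).ncard ^ k ≤ Nat.card H :=
    (hA.mono_s13 Set.sdiff_subset).ncard_pow_le_card_of_index_two hidx fun _ ha => ha.2
  have hcard : Nat.card H = Fintype.card Γ / 2 := by
    rw [← Nat.card_eq_fintype_card, ← H.index_mul_card, hidx]
    omega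
  calc (A.ncard - 1) ^ k ≤ (A \ H).ncard ^ k := Nat.pow_le_pow_left (by omega) k
    _ ≤ Fintype.card Γ / 2 := hcard ▸ houter
end

section
/- Let G be a graph on n vertices with girth at least 2k+1 containing h Hamilton cycles. Then the symmetric group Sₙ contains an S_k-set of size at least h/2^{n−1}. -/
/-- A Hamilton cycle of a graph `G`, viewed as a spanning subgraph of `G` which
is connected and 2-regular. -/
def IsHamCycleSubgraph {n : ℕ} (G H : SimpleGraph (Fin n)) : Prop :=
  H ≤ G ∧ H.Connected ∧ ∀ v, (H.neighborSet v).ncard = 2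

open SimpleGraph Equiv Finset

namespace SimpleGraph.Walk

variable {V : Type*} {G : SimpleGraph V} {R : V → V → Prop}

theorem isPath_of_forall_darts_of_length_lt_egirth (hR : ∀ u v, R u v → ¬ R v u) :
    ∀ {u v : V} (p : G.Walk u v), (∀ d ∈ p.darts, R d.fst d.snd) →
      p.length < G.egirth → p.IsPath
  | _, _, .nil, _, _ => .nil
  | u, _, .cons (v := w) huw p, hR', hlen => by
    classical
    have hp : p.IsPath := isPath_of_forall_darts_of_length_lt_egirth hR p
      (fun d hd => hR' d (by simp [hd]))
      (lt_of_le_of_lt (by simp) hlen)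
    refine (cons_isPath_iff huw p).2 ⟨hp, fun hu => ?_⟩
    have hRuw : R u w := hR' ⟨(u, w), huw⟩ (by simp)
    obtain ⟨q, hq, hqp, hqd⟩ : ∃ q : G.Walk w u, q.IsPath ∧ q.length ≤ p.length ∧
        ∀ d ∈ q.darts, R d.fst d.snd :=
      ⟨p.takeUntil u hu, hp.takeUntil hu, p.length_takeUntil_le_length hu,
        fun d hd => hR' d (List.mem_cons_of_mem _ (p.darts_takeUntil_subset_darts hu hd))⟩
    -- `q` cannot start by stepping back along `uw`, since `R u w`; so `uw` closes a cycle
    have hedge : s(u, w) ∉ q.edges := by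
      cases q with
      | nil => simp
      | cons hwx q' =>
        have hwq' : w ∉ q'.support := ((cons_isPath_iff _ _).1 hq).2
        rw [edges_cons, List.mem_cons, not_or]
        refine ⟨fun hux => ?_, fun huq => hwq' (q'.snd_mem_support_of_mem_edges huq)⟩
        rcases Sym2.eq_iff.1 hux with ⟨rfl, -⟩ | ⟨rfl, -⟩
        · exact huw.ne rfl
        · exact hR _ _ hRuw (hqd ⟨(w, u), hwx⟩ (by simp))
    have hcyc : G.egirth ≤ ((q.length + 1 : ℕ) : ℕ∞) :=
      by simpa using egirth_le_length (Path.cons_isCycle ⟨q, hq⟩ huw hedge)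
    have hshort : ((q.length + 1 : ℕ) : ℕ∞) ≤ ((cons huw p).length : ℕ) := by
      simpa using hqp
    exact (hcyc.trans hshort).not_gt hlen

theorem eq_of_forall_darts_of_length_add_lt_egirth (hR : ∀ u v, R u v → ¬ R v u) {u v : V}
    {p q : G.Walk u v} (hp : ∀ d ∈ p.darts, R d.fst d.snd) (hq : ∀ d ∈ q.darts, R d.fst d.snd)
    (hlen : ((p.length + q.length : ℕ) : ℕ∞) < G.egirth) : p = q := by
  by_contra hne
  have hpath : ∀ r : G.Walk u v, (∀ d ∈ r.darts, R d.fst d.snd) →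
      r.length ≤ p.length + q.length → r.IsPath := fun r hr hrl =>
    isPath_of_forall_darts_of_length_lt_egirth hR r hr (lt_of_le_of_lt (by exact_mod_cast hrl) hlen)
  obtain ⟨_, _, _, c, hc, hclen⟩ :=
    (hpath p hp (by omega)).exists_isCycle_length_le_add_of_ne (hpath q hq (by omega)) hne
  exact (egirth_le_length hc).not_gt (lt_of_le_of_lt (by exact_mod_cast hclen) hlen)

end SimpleGraph.Walk

section
variable {V : Type*} (G : SimpleGraph V)

def prodWalk : (l : List (Perm V)) → (∀ σ ∈ l, ∀ x, G.Adj (σ x) x) → (v : V) →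
    G.Walk (l.prod v) v
  | [], _, _ => .nil
  | σ :: l, h, v => .cons (by rw [List.prod_cons]; exact h σ List.mem_cons_self _)
      (prodWalk l (fun τ hτ => h τ (List.mem_cons_of_mem _ hτ)) v)

variable {G}

theorem length_prodWalk : ∀ (l : List (Perm V)) (h : ∀ σ ∈ l, ∀ x, G.Adj (σ x) x) (v : V),
    (prodWalk G l h v).length = l.length
  | [], _, _ => rfl
  | σ :: l, h, v => by rw [prodWalk, Walk.length_cons, length_prodWalk, List.length_cons]

theorem exists_of_mem_darts_prodWalk : ∀ {l : List (Perm V)}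
    {h : ∀ σ ∈ l, ∀ x, G.Adj (σ x) x} {v : V} {d : G.Dart}, d ∈ (prodWalk G l h v).darts →
    ∃ σ ∈ l, d.fst = σ d.snd
  | σ :: l, h, v, d, hd => by
    rw [prodWalk, Walk.darts_cons, List.mem_cons] at hd
    rcases hd with rfl | hd
    · exact ⟨σ, List.mem_cons_self, rfl⟩
    · obtain ⟨τ, hτ, hd⟩ := exists_of_mem_darts_prodWalk hd
      exact ⟨τ, List.mem_cons_of_mem _ hτ, hd⟩

theorem eq_of_forall_support_prodWalk_eq : ∀ {l₁ l₂ : List (Perm V)}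
    {h₁ : ∀ σ ∈ l₁, ∀ x, G.Adj (σ x) x} {h₂ : ∀ σ ∈ l₂, ∀ x, G.Adj (σ x) x},
    l₁.length = l₂.length →
    (∀ v, (prodWalk G l₁ h₁ v).support = (prodWalk G l₂ h₂ v).support) → l₁ = l₂
  | [], [], _, _, _, _ => rfl
  | σ₁ :: l₁, σ₂ :: l₂, h₁, h₂, hlen, hsupp => by
    simp only [prodWalk, Walk.support_cons, List.cons.injEq] at hsupp
    obtain rfl : l₁ = l₂ :=
      eq_of_forall_support_prodWalk_eq (by simpa using hlen) fun v => (hsupp v).2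
    refine congrArg (· :: l₁) (Equiv.ext fun x => ?_)
    simpa using (hsupp ((l₁.prod)⁻¹ x)).1

theorem isSkSet_of_forall_adj_rel {R : V → V → Prop} (hR : ∀ u v, R u v → ¬ R v u)
    {A : Set (Perm V)} (hA : ∀ σ ∈ A, ∀ x, G.Adj x (σ x) ∧ R x (σ x)) {k : ℕ}
    (hk : (2 * k : ℕ∞) < G.egirth) : IsSkSet k A := by
  intro a b ha hb hab
  have hadj : ∀ c : Fin k → Perm V, (∀ i, c i ∈ A) → ∀ σ ∈ List.ofFn c, ∀ x, G.Adj (σ x) x :=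
    fun c hc σ hσ x => by
      obtain ⟨i, rfl⟩ := List.mem_ofFn.1 hσ
      exact (hA _ (hc i) x).1.symm
  have hback : ∀ c hc v, ∀ d ∈ (prodWalk G (List.ofFn c) (hadj c hc) v).darts, R d.snd d.fst :=
    fun c hc v d hd => by
      obtain ⟨σ, hσ, hd⟩ := exists_of_mem_darts_prodWalk hd
      obtain ⟨i, rfl⟩ := List.mem_ofFn.1 hσ
      exact hd ▸ (hA _ (hc i) d.snd).2
  refine List.ofFn_injective (eq_of_forall_support_prodWalk_eq (h₁ := hadj a ha) (h₂ := hadj b hb)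
    (by simp) fun v => ?_)
  have := Walk.eq_of_forall_darts_of_length_add_lt_egirth (R := fun u w => R w u)
    (fun u w h h' => hR _ _ h h') (hback a ha v)
    (q := (prodWalk G _ (hadj b hb) v).copy (by rw [hab]) rfl)
    (by simpa using hback b hb v) (by simpa [length_prodWalk, two_mul] using hk)
  rw [this, Walk.support_copy]

end

namespace Equiv.Perm

variable {V : Type*}

def toSimpleGraph (σ : Perm V) : SimpleGraph V := SimpleGraph.fromRel fun u v => σ u = v

theorem toSimpleGraph_adj {σ : Perm V} {u v : V} :
    σ.toSimpleGraph.Adj u v ↔ u ≠ v ∧ (σ u = v ∨ σ v = u) :=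
  SimpleGraph.fromRel_adj _ _ _

@[simp]
theorem toSimpleGraph_inv (σ : Perm V) : σ⁻¹.toSimpleGraph = σ.toSimpleGraph := by
  ext u v
  simp only [toSimpleGraph_adj, Perm.inv_eq_iff_eq, eq_comm (a := u), eq_comm (a := v), or_comm]

theorem apply_apply_ne_of_ncard_neighborSet {σ : Perm V} {v : V}
    (h : (σ.toSimpleGraph.neighborSet v).ncard = 2) : σ (σ v) ≠ v := by
  intro hσ
  have hsub : σ.toSimpleGraph.neighborSet v ⊆ {σ v} := by
    rintro u ⟨-, rfl | hu⟩
    · rfl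
    · exact σ.injective (hu.trans hσ.symm)
  have := Set.ncard_le_ncard hsub (Set.finite_singleton _)
  rw [h, Set.ncard_singleton] at this
  omega

theorem toSimpleGraph_eq_of_forall_adj {σ : Perm V} {H : SimpleGraph V}
    (hreg : ∀ v, (H.neighborSet v).ncard = 2) (hσ : ∀ v, H.Adj v (σ v) ∧ σ (σ v) ≠ v) :
    σ.toSimpleGraph = H := by
  ext u w
  rw [toSimpleGraph_adj]
  refine ⟨fun ⟨_, hw⟩ => ?_, fun huw => ⟨huw.ne, ?_⟩⟩
  · rcases hw with rfl | rfl
    exacts [(hσ u).1, (hσ w).1.symm]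
  · have hne : σ u ≠ σ⁻¹ u := fun h => (hσ u).2 (by simpa using congrArg σ h)
    have hnbr : {σ u, σ⁻¹ u} = H.neighborSet u := by
      refine Set.eq_of_subset_of_ncard_le ?_ (by rw [hreg, Set.ncard_pair hne])
        (Set.finite_of_ncard_ne_zero (by rw [hreg]; omega))
      rintro x (rfl | rfl)
      · exact (hσ u).1
      · simpa using ((hσ (σ⁻¹ u)).1).symm
    have hw : w ∈ ({σ u, σ⁻¹ u} : Set V) := hnbr ▸ huw
    rcases hw with rfl | rfl
    exacts [Or.inl rfl, Or.inr (by simp)]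

theorem exists_toSimpleGraph_eq [Finite V] {H : SimpleGraph V} (hconn : H.Connected)
    (hreg : ∀ v, (H.neighborSet v).ncard = 2) : ∃ σ : Perm V, σ.toSimpleGraph = H := by
  classical
  obtain ⟨v⟩ := hconn.nonempty
  obtain ⟨c, hc, hcv⟩ :=
    (show H.IsCycles from fun v _ => hreg v).exists_cycle_toSubgraph_verts_eq_connectedComponentSupp
      (c := H.connectedComponentMk v) rfl (Set.nonempty_of_ncard_ne_zero (by rw [hreg]; omega))
  set l := c.support.tail
  have hnodup : l.Nodup := hc.support_nodup
  have hlen : l.length = c.length := by simp [l, Walk.length_support]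
  have hget : ∀ i (hi : i < l.length), l[i] = c.getVert (i + 1) := fun i hi => by
    rw [c.getVert_eq_support_getElem (by omega), List.getElem_tail]
  have hmem : ∀ w, w ∈ l := by
    intro w
    have hw : w ∈ c.support := by
      rw [← Walk.mem_verts_toSubgraph, hcv, ConnectedComponent.mem_supp_iff,
        ConnectedComponent.eq]
      exact hconn.preconnected w v
    rw [← Walk.cons_tail_support, List.mem_cons] at hw
    rcases hw with rfl | hw
    exacts [Walk.end_mem_tail_support hc.not_nil, hw]
  have h3 : 3 ≤ l.length := hlen ▸ hc.three_le_length
  refine ⟨l.formPerm, toSimpleGraph_eq_of_forall_adj hreg fun w => ?_⟩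
  obtain ⟨i, hi, rfl⟩ := List.getElem_of_mem (hmem w)
  constructor
  · rw [List.formPerm_apply_getElem _ hnodup, hget, hget]
    rcases Nat.lt_or_ge (i + 1) l.length with h | h
    · rw [Nat.mod_eq_of_lt h]
      exact c.adj_getVert_succ (by omega)
    · rw [show i + 1 = l.length by omega, Nat.mod_self, hlen, Walk.getVert_length]
      simpa using c.adj_getVert_succ (i := 0) (by omega)
  · rw [← Perm.mul_apply, ← pow_two, List.formPerm_pow_apply_getElem _ hnodup, Ne,
      hnodup.getElem_inj_iff]
    rcases Nat.lt_or_ge (i + 2) l.length with h | h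
    · rw [Nat.mod_eq_of_lt h]
      omega
    · rw [Nat.mod_eq_sub_mod h, Nat.mod_eq_of_lt (by omega)]
      omega

end Equiv.Perm

section
variable {V : Type*}

theorem two_mul_ncard_le_ncard_preimage_toSimpleGraph [Finite V] {𝓗 : Set (SimpleGraph V)}
    (h𝓗 : ∀ H ∈ 𝓗, H.Connected ∧ ∀ v, (H.neighborSet v).ncard = 2) :
    2 * 𝓗.ncard ≤ (Perm.toSimpleGraph ⁻¹' 𝓗).ncard := by
  choose! τ hτ using fun H (hH : H ∈ 𝓗) => Perm.exists_toSimpleGraph_eq (h𝓗 H hH).1 (h𝓗 H hH).2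
  have hτ_ne : ∀ H ∈ 𝓗, (τ H)⁻¹ ≠ τ H := by
    intro H hH heq
    obtain ⟨v⟩ := (h𝓗 H hH).1.nonempty
    have hdeg := (h𝓗 H hH).2 v
    rw [← hτ H hH] at hdeg
    exact Perm.apply_apply_ne_of_ncard_neighborSet hdeg (by nth_rw 1 [← heq]; simp)
  let f : SimpleGraph V × Bool → Perm V := fun p => bif p.2 then τ p.1 else (τ p.1)⁻¹
  have hf : ∀ p ∈ 𝓗 ×ˢ (Set.univ : Set Bool), (f p).toSimpleGraph = p.1 := by
    rintro ⟨H, _ | _⟩ ⟨hH, -⟩ <;> simp [f, hτ H hH]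
  calc 2 * 𝓗.ncard = (𝓗 ×ˢ (Set.univ : Set Bool)).ncard := by
        rw [Set.ncard_prod, Set.ncard_univ, Nat.card_eq_fintype_card, Fintype.card_bool, mul_comm]
    _ ≤ (Perm.toSimpleGraph ⁻¹' 𝓗).ncard := by
      refine Set.ncard_le_ncard_of_injOn f (fun p hp => ?_) ?_
      · rw [Set.mem_preimage, hf p hp]; exact hp.1
      · rintro ⟨H₁, b₁⟩ hp₁ ⟨H₂, b₂⟩ hp₂ heq
        obtain rfl : H₁ = H₂ := (hf _ hp₁).symm.trans (heq ▸ hf _ hp₂)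
        cases b₁ <;> cases b₂ <;> simp_all [f, eq_comm (a := τ H₁)]

end

theorem Nat.card_subtype_forall_comp_eq {α β γ : Type*} [Finite α] [Finite β] {e : α → β}
    (he : Function.Injective e) (r : α → γ) :
    Nat.card {o : β → γ // ∀ a, o (e a) = r a} = Nat.card γ ^ (Nat.card β - Nat.card α) := by
  classical
  let x₀ : Set.range e → γ := fun b => r ((Equiv.ofInjective e he).symm b)
  calc Nat.card {o : β → γ // ∀ a, o (e a) = r a}
      = Nat.card {o : β → γ // o ∘ Subtype.val = x₀} :=
        Nat.card_congr (Equiv.subtypeEquivRight fun o => by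
          simp only [funext_iff, Set.forall_subtype_range_iff, Function.comp_apply, x₀,
            Equiv.ofInjective_symm_apply])
    _ = Nat.card (↥(Set.range e)ᶜ → γ) := Nat.card_congr (Equiv.subtypePreimage _ x₀)
    _ = Nat.card γ ^ (Nat.card β - Nat.card α) := by
      rw [Nat.card_fun, Nat.card_coe_set_eq, Set.ncard_compl, Set.ncard_range_of_injective he]

section Orientation

variable {V : Type*} [LinearOrder V]

/-- An orientation `o` of the edges of the complete graph on `V` directs the edge `uv` from its
smaller to its larger endpoint when `o s(u, v) = true`. -/
def IsForward (o : Sym2 V → Bool) (u v : V) : Prop :=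
  u ≠ v ∧ o s(u, v) = decide (u < v)

theorem IsForward.not_isForward {o : Sym2 V → Bool} {u v : V} (h : IsForward o u v) :
    ¬ IsForward o v u := by
  rintro ⟨-, h'⟩
  rw [Sym2.eq_swap, h.2] at h'
  rcases h.1.lt_or_gt with huv | huv <;> simp [huv, huv.not_gt] at h'

theorem Nat.card_forall_isForward [Finite V] {σ : Perm V} (hσ : ∀ v, σ (σ v) ≠ v) :
    Nat.card {o : Sym2 V → Bool // ∀ v, IsForward o v (σ v)} =
      2 ^ (Nat.card (Sym2 V) - Nat.card V) := by
  have hne : ∀ v, v ≠ σ v := fun v h => hσ v (by rw [← h, ← h])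
  have hinj : Function.Injective fun v => s(v, σ v) := by
    intro v w hvw
    rcases Sym2.eq_iff.1 hvw with ⟨h, -⟩ | ⟨rfl, h⟩
    exacts [h, absurd h (hσ _)]
  calc Nat.card {o : Sym2 V → Bool // ∀ v, IsForward o v (σ v)}
      = Nat.card {o : Sym2 V → Bool // ∀ v, o s(v, σ v) = decide (v < σ v)} :=
        Nat.card_congr (subtypeEquivRight fun o => forall_congr' fun v => and_iff_right (hne v))
    _ = 2 ^ (Nat.card (Sym2 V) - Nat.card V) := by
      rw [Nat.card_subtype_forall_comp_eq hinj, Nat.card_eq_fintype_card (α := Bool),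
        Fintype.card_bool]

theorem exists_orientation_le_ncard [Finite V] (D : Set (Perm V))
    (hD : ∀ σ ∈ D, ∀ v, σ (σ v) ≠ v) :
    ∃ o : Sym2 V → Bool, D.ncard ≤ 2 ^ Nat.card V * {σ ∈ D | ∀ v, IsForward o v (σ v)}.ncard := by
  classical
  have := Fintype.ofFinite V
  set N := Nat.card (Sym2 V)
  set n := Nat.card V
  have hnN : n ≤ N := Nat.card_le_card_of_injective _ Sym2.diag_injective
  have hpow : 2 ^ N = 2 ^ n * 2 ^ (N - n) := by rw [← pow_add, Nat.add_sub_cancel' hnN]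
  have hsum : ∑ o : Sym2 V → Bool, #{σ ∈ D.toFinset | ∀ v, IsForward o v (σ v)} =
      #D.toFinset * 2 ^ (N - n) :=
    (sum_card_bipartiteAbove_eq_sum_card_bipartiteBelow _).trans <| sum_const_nat fun σ hσ => by
      rw [bipartiteBelow, ← Nat.card_forall_isForward (hD σ (Set.mem_toFinset.1 hσ)),
        Nat.card_eq_fintype_card, Fintype.card_subtype]
  obtain ⟨o, -, ho⟩ := Finset.exists_le_of_sum_le (s := univ) univ_nonempty
    (f := fun _ => #D.toFinset * 2 ^ (N - n))
    (g := fun o => 2 ^ n * #{σ ∈ D.toFinset | ∀ v, IsForward o v (σ v)} * 2 ^ (N - n)) (by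
      rw [sum_const, card_univ, ← Finset.sum_mul, ← Finset.mul_sum, hsum, smul_eq_mul,
        Fintype.card_fun, Fintype.card_bool, ← Nat.card_eq_fintype_card, hpow]
      exact le_of_eq (by ring))
  refine ⟨o, ?_⟩
  rw [Set.ncard_eq_toFinset_card' D, Set.ncard_eq_toFinset_card']
  convert Nat.le_of_mul_le_mul_right ho (by positivity) using 3
  ext
  simp

end Orientation

/-- If `G` is a graph on `n` vertices with girth at least `2k+1` containing `h`
Hamilton cycles, then `Sₙ` contains an `S_k`-set of size at least `h/2^{n-1}`. -/
theorem stmt_15 (n k h : ℕ) (G : SimpleGraph (Fin n))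
    (hgirth : (2 * k + 1 : ℕ∞) ≤ G.girth)
    (hham : {H : SimpleGraph (Fin n) | IsHamCycleSubgraph G H}.ncard = h) :
    ∃ A : Set (Equiv.Perm (Fin n)), IsSkSet k A ∧ h ≤ 2 ^ (n - 1) * A.ncard := by
  set D := {σ : Perm (Fin n) | IsHamCycleSubgraph G σ.toSimpleGraph}
  have hD : 2 * h ≤ D.ncard :=
    hham ▸ two_mul_ncard_le_ncard_preimage_toSimpleGraph fun _ hH => hH.2
  have hD2 : ∀ σ ∈ D, ∀ v, σ (σ v) ≠ v :=
    fun σ hσ v => Perm.apply_apply_ne_of_ncard_neighborSet (hσ.2.2 v)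
  have hDadj : ∀ σ ∈ D, ∀ v, G.Adj v (σ v) := fun σ hσ v =>
    hσ.1 (Perm.toSimpleGraph_adj.2 ⟨fun h => hD2 σ hσ v (by rw [← h, ← h]), Or.inl rfl⟩)
  obtain ⟨o, ho⟩ := exists_orientation_le_ncard D hD2
  refine ⟨{σ ∈ D | ∀ v, IsForward o v (σ v)},
    isSkSet_of_forall_adj_rel (R := IsForward o) (fun _ _ => IsForward.not_isForward)
      (fun σ hσ v => ⟨hDadj σ hσ.1 v, hσ.2 v⟩) ?_, ?_⟩
  · calc (2 * k : ℕ∞) < 2 * k + 1 := by norm_cast; omega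
      _ ≤ G.girth := hgirth
      _ ≤ G.egirth := ENat.natCast_toNat_le_self _
  · rw [Nat.card_fin] at ho
    rcases n with _ | n
    · simp only [pow_zero, one_mul] at ho ⊢
      omega
    · rw [pow_succ, mul_right_comm] at ho
      simp only [Nat.add_sub_cancel]
      omega
end

section
/- Let Γ be a finite group of order n and let A ⊆ Γ be an S_k-set. Define A' = {π ∈ Sym(Γ) : π(x) ∈ xA for all x ∈ Γ} (permutations of Γ moving each element by right-multiplication by some element of A). Then A' is an S_k-set in the symmetric group Sym(Γ). -/
theorem IsSkSet.eq_of_prod_eq {Γ : Type*} [Group Γ] {k : ℕ} {A : Set Γ} (hA : IsSkSet k A)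
    {l m : List Γ} (hl : l.length = k) (hm : m.length = k) (hlA : ∀ a ∈ l, a ∈ A)
    (hmA : ∀ b ∈ m, b ∈ A) (h : l.prod = m.prod) : l = m := by
  subst hl
  have hm' : List.ofFn (fun i : Fin l.length => m[(i : ℕ)]) = m := by
    apply List.ext_getElem <;> simp [hm]
  have hofFn := hA _ _ (fun i => hlA _ (List.getElem_mem _)) (fun i => hmA _ (List.getElem_mem _))
    (by rwa [List.ofFn_getElem, hm'])
  rw [← List.ofFn_getElem (xs := l), hofFn, hm']

namespace Equiv.Perm

variable {Γ : Type*} [Group Γ]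

def displacements : List (Perm Γ) → Γ → List Γ
  | [], _ => []
  | π :: l, x => displacements l x ++ [(l.prod x)⁻¹ * π (l.prod x)]

theorem length_displacements (l : List (Perm Γ)) (x : Γ) :
    (displacements l x).length = l.length := by
  induction l with
  | nil => rfl
  | cons π l ih => simp [displacements, ih]

theorem prod_displacements (l : List (Perm Γ)) (x : Γ) :
    (displacements l x).prod = x⁻¹ * l.prod x := by
  induction l with
  | nil => simp [displacements]
  | cons π l ih => simp [displacements, ih, mul_assoc]

theorem mem_of_mem_displacements {A : Set Γ} {l : List (Perm Γ)}
    (hl : ∀ π ∈ l, ∀ y, ∃ a ∈ A, π y = y * a) (x : Γ) : ∀ c ∈ displacements l x, c ∈ A := by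
  induction l with
  | nil => simp [displacements]
  | cons π l ih =>
    obtain ⟨a, ha, hπ⟩ := hl π List.mem_cons_self (l.prod x)
    simp only [displacements, List.mem_append, List.mem_singleton, hπ, inv_mul_cancel_left]
    rintro c (hc | rfl)
    · exact ih (fun σ hσ => hl σ (List.mem_cons_of_mem π hσ)) c hc
    · exact ha

theorem displacements_injective : Function.Injective (displacements (Γ := Γ)) := by
  intro l m h
  induction l generalizing m with
  | nil =>
    cases m with
    | nil => rfl
    | cons σ m => simpa [length_displacements] using congrArg List.length (congrFun h 1)
  | cons π l ih =>
    cases m with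
    | nil => simpa [length_displacements] using congrArg List.length (congrFun h 1)
    | cons σ m =>
      have hsplit (x : Γ) := List.append_inj' (congrFun h x) rfl
      obtain rfl : l = m := ih (funext fun x => (hsplit x).1)
      congr
      ext y
      simpa using (hsplit ((l.prod)⁻¹ y)).2

end Equiv.Perm

open Equiv.Perm in
theorem stmt_16_general {Γ : Type*} [Group Γ] (k : ℕ) (A : Set Γ)
    (hA : IsSkSet k A) :
    IsSkSet k {π : Equiv.Perm Γ | ∀ x : Γ, ∃ a ∈ A, π x = x * a} := by
  intro a b ha hb hab
  apply List.ofFn_injective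
  apply displacements_injective
  funext x
  apply hA.eq_of_prod_eq (by simp [length_displacements]) (by simp [length_displacements])
    (mem_of_mem_displacements (List.forall_mem_ofFn_iff.mpr ha) x)
    (mem_of_mem_displacements (List.forall_mem_ofFn_iff.mpr hb) x)
  rw [prod_displacements, prod_displacements, hab]

/-- If `A` is an `S_k`-set in a finite group `Γ`, then the set
`A' = {π ∈ Sym(Γ) : π(x) ∈ xA for all x}` is an `S_k`-set in `Sym(Γ)`. -/
theorem stmt_16 {Γ : Type*} [Group Γ] [Fintype Γ] (k : ℕ) (A : Set Γ)
    (hA : IsSkSet k A) :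
    IsSkSet k {π : Equiv.Perm Γ | ∀ x : Γ, ∃ a ∈ A, π x = x * a} :=
  stmt_16_general k A hA
end

section
/- Let G be a directed graph with minimum outdegree δ⁺ ≥ 1 that contains no two distinct directed walks of length k with the same initial and same terminal vertices (G is F_k-free). Then |V(G)| ≥ (δ⁺)^k. -/
/-! Fix a vertex `v₀`. A walk of length `n` from `v₀` extends by each out-neighbour of its
endpoint, so there are at least `δ ^ n` walks of length `n` from `v₀`. For `n = k`,
`F_k`-freeness says that such a walk is determined by its endpoint. -/

section

variable {V : Type*} (E : V → V → Prop)

def WalkFrom (v₀ : V) (n : ℕ) : Type _ :=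
  {f : Fin (n + 1) → V // f 0 = v₀ ∧ ∀ i : Fin n, E (f i.castSucc) (f i.succ)}

namespace WalkFrom

variable {E} {v₀ : V} {n : ℕ}

def last (w : WalkFrom E v₀ n) : V := w.1 (Fin.last n)

def init (w : WalkFrom E v₀ (n + 1)) : WalkFrom E v₀ n :=
  ⟨Fin.init w.1, w.2.1, fun i => by simpa only [Fin.init, Fin.succ_castSucc] using w.2.2 i.castSucc⟩

theorem init_adj_last (w : WalkFrom E v₀ (n + 1)) : E w.init.last w.last := by
  simpa only [init, last, Fin.init, Fin.succ_last] using w.2.2 (Fin.last n)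

def snoc (w : WalkFrom E v₀ n) (u : V) (hu : E w.last u) : WalkFrom E v₀ (n + 1) :=
  ⟨Fin.snoc w.1 u, by simpa only [← Fin.castSucc_zero, Fin.snoc_castSucc] using w.2.1, by
    refine Fin.lastCases ?_ fun i => ?_
    · rw [Fin.succ_last, Fin.snoc_castSucc, Fin.snoc_last]
      exact hu
    · simpa only [Fin.succ_castSucc, Fin.snoc_castSucc] using w.2.2 i⟩

def equivSigma : WalkFrom E v₀ (n + 1) ≃ Σ w : WalkFrom E v₀ n, {u // E w.last u} where
  toFun w := ⟨w.init, w.last, w.init_adj_last⟩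
  invFun p := p.1.snoc p.2.1 p.2.2
  left_inv w := Subtype.ext (Fin.snoc_init_self w.1)
  right_inv _ := Sigma.subtype_ext (Subtype.ext (Fin.init_snoc (α := fun _ => V) _ _))
    (Fin.snoc_last (α := fun _ => V) _ _)

instance [Finite V] : Finite (WalkFrom E v₀ n) := Subtype.finite

instance : Nonempty (WalkFrom E v₀ 0) := ⟨⟨fun _ => v₀, rfl, Fin.elim0⟩⟩

theorem mul_natCard_le_natCard_succ [Finite V] {δ : ℕ} (hout : ∀ v, δ ≤ {u | E v u}.ncard) :
    δ * Nat.card (WalkFrom E v₀ n) ≤ Nat.card (WalkFrom E v₀ (n + 1)) := by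
  have := Fintype.ofFinite (WalkFrom E v₀ n)
  calc δ * Nat.card (WalkFrom E v₀ n) = ∑ _w : WalkFrom E v₀ n, δ := by
        simp [Nat.card_eq_fintype_card, mul_comm]
    _ ≤ ∑ w : WalkFrom E v₀ n, Nat.card {u // E w.last u} :=
        Finset.sum_le_sum fun w _ => hout w.last
    _ = Nat.card (WalkFrom E v₀ (n + 1)) := by rw [← Nat.card_sigma, Nat.card_congr equivSigma]

theorem pow_le_natCard [Finite V] {δ : ℕ} (hout : ∀ v, δ ≤ {u | E v u}.ncard) :
    ∀ n, δ ^ n ≤ Nat.card (WalkFrom E v₀ n)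
  | 0 => Nat.card_pos
  | n + 1 => calc
      δ ^ (n + 1) = δ * δ ^ n := pow_succ' δ n
      _ ≤ δ * Nat.card (WalkFrom E v₀ n) := Nat.mul_le_mul_left δ (pow_le_natCard hout n)
      _ ≤ Nat.card (WalkFrom E v₀ (n + 1)) := mul_natCard_le_natCard_succ hout

theorem last_injective
    (hfree : ∀ v w : Fin (n + 1) → V,
      (∀ i : Fin n, E (v i.castSucc) (v i.succ)) →
      (∀ i : Fin n, E (w i.castSucc) (w i.succ)) →
      v 0 = w 0 → v (Fin.last n) = w (Fin.last n) → v = w) :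
    Function.Injective (last : WalkFrom E v₀ n → V) := fun v w h =>
  Subtype.ext (hfree v.1 w.1 v.2.2 w.2.2 (v.2.1.trans w.2.1.symm) h)

end WalkFrom

end

theorem stmt_18_general {V : Type*} [Fintype V] [Nonempty V] (E : V → V → Prop)
    (k δ : ℕ) (hout : ∀ v : V, δ ≤ {u | E v u}.ncard)
    (hfree : ∀ v w : Fin (k + 1) → V,
      (∀ i : Fin k, E (v i.castSucc) (v i.succ)) →
      (∀ i : Fin k, E (w i.castSucc) (w i.succ)) →
      v 0 = w 0 → v (Fin.last k) = w (Fin.last k) → v = w) :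
    δ ^ k ≤ Fintype.card V := by
  obtain ⟨v₀⟩ := ‹Nonempty V›
  calc δ ^ k ≤ Nat.card (WalkFrom E v₀ k) := WalkFrom.pow_le_natCard hout k
    _ ≤ Nat.card V := Nat.card_le_card_of_injective _ (WalkFrom.last_injective hfree)
    _ = Fintype.card V := Nat.card_eq_fintype_card

/-- If a digraph on a finite nonempty vertex set `V` has minimum outdegree
`δ⁺ ≥ 1` and contains no two distinct directed walks of length `k` with the
same initial and same terminal vertices (it is `F_k`-free), then
`|V| ≥ (δ⁺)^k`. -/
theorem stmt_18 {V : Type*} [Fintype V] [Nonempty V] (E : V → V → Prop)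
    (k δ : ℕ) (hδ : 1 ≤ δ) (hout : ∀ v : V, δ ≤ {u | E v u}.ncard)
    (hfree : ∀ v w : Fin (k + 1) → V,
      (∀ i : Fin k, E (v i.castSucc) (v i.succ)) →
      (∀ i : Fin k, E (w i.castSucc) (w i.succ)) →
      v 0 = w 0 → v (Fin.last k) = w (Fin.last k) → v = w) :
    δ ^ k ≤ Fintype.card V :=
  stmt_18_general E k δ hout hfree
end

section
/- Fix ℓ ≥ 2 and m ≥ 1, and let G_{ℓ,m} be the digraph defined on vertex set V₀ ⊔ ⋯ ⊔ V_{ℓ−2} ⊔ W₀ ⊔ ⋯ ⊔ W_{ℓ−2}, where each Vᵢ = {v_{ijk} : j, k ∈ [m]} and Wᵢ = {w_{ijk} : j, k ∈ [m]}, with edges: (v_{ijk}, v_{(i+1)j'k}) for all j' and 0 ≤ i ≤ ℓ−3; (v_{(ℓ−2)jk}, w_{0j'k}) for all j'; (w_{ijk}, w_{(i+1)jk'}) for all k' and 0 ≤ i ≤ ℓ−3; and (w_{(ℓ−2)jk}, v_{0jk'}) for all k'. Then G_{ℓ,m} contains no copy of C_{ℓ,ℓ}, i.e., no two internally disjoint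 directed paths of length ℓ from a common vertex x to a common vertex y. -/
/-!
Leaving a vertex of `V` keeps its `k`-coordinate and leaving a vertex of `W` keeps its
`j`-coordinate, while every edge moves one class further along the cycle
`V₀ → ⋯ → V_{ℓ-2} → W₀ → ⋯ → W_{ℓ-2} → V₀`. Hence a directed walk of length `ℓ` starting in
`V_i` enters `W₀` after exactly `ℓ - 1 - i` steps, at a vertex whose `k` is that of the start
and whose `j` is that of the end (the remaining `i + 1` steps leave `j` alone). Two such walks
with common ends therefore share this internal vertex. A walk starting in `W` is reduced to
this case by the automorphism exchanging `v_{ijk}` with `w_{ikj}`.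
-/

/-- The edge relation of the digraph `G_{ℓ,m}`. Vertices are quadruples
`(a, i, j, k)` where `a = 0` encodes the classes `Vᵢ = {v_{ijk}}` and `a = 1`
the classes `Wᵢ = {w_{ijk}}`, with `0 ≤ i ≤ ℓ−2` and `j, k ∈ [m]`.
Edges: `(v_{ijk}, v_{(i+1)j'k})`, `(v_{(ℓ−2)jk}, w_{0j'k})`,
`(w_{ijk}, w_{(i+1)jk'})`, and `(w_{(ℓ−2)jk}, v_{0jk'})`. -/
def GEdge (ℓ m : ℕ) (x y : Fin 2 × Fin (ℓ - 1) × Fin m × Fin m) : Prop :=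
  (x.1 = 0 ∧ y.1 = 0 ∧ (y.2.1 : ℕ) = (x.2.1 : ℕ) + 1 ∧ y.2.2.2 = x.2.2.2) ∨
  (x.1 = 0 ∧ y.1 = 1 ∧ (x.2.1 : ℕ) = ℓ - 2 ∧ (y.2.1 : ℕ) = 0 ∧
    y.2.2.2 = x.2.2.2) ∨
  (x.1 = 1 ∧ y.1 = 1 ∧ (y.2.1 : ℕ) = (x.2.1 : ℕ) + 1 ∧ y.2.2.1 = x.2.2.1) ∨
  (x.1 = 1 ∧ y.1 = 0 ∧ (x.2.1 : ℕ) = ℓ - 2 ∧ (y.2.1 : ℕ) = 0 ∧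
    y.2.2.1 = x.2.2.1)

lemma eq_of_forall_succ_eq {β : Type*} {f : ℕ → β} {a b : ℕ} (hab : a ≤ b)
    (h : ∀ n, a ≤ n → n < b → f (n + 1) = f n) : f b = f a := by
  induction b, hab using Nat.le_induction with
  | base => rfl
  | succ n han ih => rw [h n han (by omega), ih fun k hk hkn => h k hk (by omega)]

lemma Fin.ofNat_rel_succ {α : Type*} {r : α → α → Prop} {n : ℕ} {p : Fin (n + 1) → α}
    (hp : ∀ i : Fin n, r (p i.castSucc) (p i.succ)) (t : ℕ) (ht : t < n) :
    r (p (Fin.ofNat (n + 1) t)) (p (Fin.ofNat (n + 1) (t + 1))) := by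
  convert hp ⟨t, ht⟩ using 2 <;> ext <;> simp only [Fin.val_ofNat] <;>
    exact Nat.mod_eq_of_lt (by omega)

abbrev GVertex (ℓ m : ℕ) := Fin 2 × Fin (ℓ - 1) × Fin m × Fin m

namespace GVertex

variable {ℓ m : ℕ}

/-- The position of the class of `v` on the cycle of classes: every edge raises it by one,
except those from `W_{ℓ-2}` back to `V₀`. -/
def level (v : GVertex ℓ m) : ℕ := (v.1 : ℕ) * (ℓ - 1) + v.2.1

lemma level_lt_iff {v : GVertex ℓ m} : v.level < ℓ - 1 ↔ v.1 = 0 := by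
  obtain ⟨a, i, -, -⟩ := v
  have := i.isLt
  unfold level
  fin_cases a <;> simp

lemma le_level_iff {v : GVertex ℓ m} : ℓ - 1 ≤ v.level ↔ v.1 = 1 := by
  rw [← not_lt, level_lt_iff]
  obtain ⟨a, -⟩ := v
  fin_cases a <;> simp

lemma fst_eq_one_of_level_eq {v : GVertex ℓ m} (h : v.level = ℓ - 1) :
    v.1 = 1 ∧ (v.2.1 : ℕ) = 0 := by
  obtain ⟨a, i, j, k⟩ := v
  have := i.isLt
  unfold level at h
  fin_cases a <;> simp at h ⊢ <;> omega

def swap (v : GVertex ℓ m) : GVertex ℓ m := (1 - v.1, v.2.1, v.2.2.2, v.2.2.1)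

lemma swap_involutive : Function.Involutive (swap : GVertex ℓ m → GVertex ℓ m) := fun v => by
  simp [swap]

end GVertex

namespace GEdge

variable {ℓ m : ℕ}

open GVertex

lemma level_eq_succ {x y : GVertex ℓ m} (h : GEdge ℓ m x y)
    (hx : x.level + 1 < 2 * (ℓ - 1)) : y.level = x.level + 1 := by
  obtain ⟨a, i, j, k⟩ := x
  obtain ⟨b, i', j', k'⟩ := y
  have := i.isLt
  unfold level at *
  rcases h with ⟨rfl, rfl, h, -⟩ | ⟨rfl, rfl, h, h', -⟩ | ⟨rfl, rfl, h, -⟩ | ⟨rfl, rfl, h, h', -⟩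
    <;> simp_all <;> omega

lemma snd_snd_snd_eq {x y : GVertex ℓ m} (h : GEdge ℓ m x y) (hx : x.1 = 0) :
    y.2.2.2 = x.2.2.2 := by
  rcases h with ⟨-, -, -, h⟩ | ⟨-, -, -, -, h⟩ | ⟨h', -⟩ | ⟨h', -⟩ <;> simp_all

lemma snd_snd_fst_eq {x y : GVertex ℓ m} (h : GEdge ℓ m x y) (hx : x.1 = 1) :
    y.2.2.1 = x.2.2.1 := by
  rcases h with ⟨h', -⟩ | ⟨h', -⟩ | ⟨-, -, -, h⟩ | ⟨-, -, -, -, h⟩ <;> simp_all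

lemma swap {x y : GVertex ℓ m} (h : GEdge ℓ m x y) : GEdge ℓ m x.swap y.swap := by
  obtain ⟨a, i, j, k⟩ := x
  obtain ⟨b, i', j', k'⟩ := y
  unfold GEdge GVertex.swap at *
  rcases h with ⟨rfl, rfl, h⟩ | ⟨rfl, rfl, h⟩ | ⟨rfl, rfl, h⟩ | ⟨rfl, rfl, h⟩ <;> simp_all

section Walk

variable {n : ℕ} {P Q : ℕ → GVertex ℓ m}

lemma level_walk (hP : ∀ t < n, GEdge ℓ m (P t) (P (t + 1))) {t : ℕ} (htn : t ≤ n)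
    (ht : (P 0).level + t < 2 * (ℓ - 1)) : (P t).level = (P 0).level + t := by
  induction t with
  | zero => rfl
  | succ t ih =>
    rw [(hP t (by omega)).level_eq_succ (by omega), ih (by omega) (by omega), add_assoc]

lemma walk_eq_of_fst_eq_zero (hℓ : 2 ≤ ℓ) (hP : ∀ t < ℓ, GEdge ℓ m (P t) (P (t + 1)))
    (h0 : (P 0).1 = 0) :
    P (ℓ - 1 - (P 0).2.1) = (1, ⟨0, by omega⟩, (P ℓ).2.2.1, (P 0).2.2.2) := by
  have := (P 0).2.1.isLt
  have hlevel : ∀ t < ℓ, (P t).level = (P 0).2.1 + t := fun t ht =>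
    (level_walk hP ht.le (by simp [level, h0]; omega)).trans (by simp [level, h0])
  set s := ℓ - 1 - (P 0).2.1
  obtain ⟨hs1, hs2⟩ := fst_eq_one_of_level_eq ((hlevel s (by omega)).trans (by omega))
  have hk : (P s).2.2.2 = (P 0).2.2.2 := eq_of_forall_succ_eq (f := fun t => (P t).2.2.2)
    s.zero_le fun t _ hts => (hP t (by omega)).snd_snd_snd_eq
      (level_lt_iff.1 (by rw [hlevel t (by omega)]; omega))
  have hj : (P ℓ).2.2.1 = (P s).2.2.1 := eq_of_forall_succ_eq (f := fun t => (P t).2.2.1)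
    (by omega) fun t _ htℓ => (hP t htℓ).snd_snd_fst_eq
      (le_level_iff.1 (by rw [hlevel t htℓ]; omega))
  ext <;> simp [hs1, hs2, hj, hk]

lemma exists_walk_eq_of_fst_eq_zero (hℓ : 2 ≤ ℓ) (hP : ∀ t < ℓ, GEdge ℓ m (P t) (P (t + 1)))
    (hQ : ∀ t < ℓ, GEdge ℓ m (Q t) (Q (t + 1))) (h0 : P 0 = Q 0) (hℓ' : P ℓ = Q ℓ)
    (hV : (P 0).1 = 0) : ∃ s, 0 < s ∧ s < ℓ ∧ P s = Q s := by
  have hQs := walk_eq_of_fst_eq_zero hℓ hQ (h0 ▸ hV)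
  rw [← h0, ← hℓ'] at hQs
  have := (P 0).2.1.isLt
  exact ⟨ℓ - 1 - (P 0).2.1, by omega, by omega, by rw [walk_eq_of_fst_eq_zero hℓ hP hV, hQs]⟩

lemma exists_walk_eq (hℓ : 2 ≤ ℓ) (hP : ∀ t < ℓ, GEdge ℓ m (P t) (P (t + 1)))
    (hQ : ∀ t < ℓ, GEdge ℓ m (Q t) (Q (t + 1))) (h0 : P 0 = Q 0) (hℓ' : P ℓ = Q ℓ) :
    ∃ s, 0 < s ∧ s < ℓ ∧ P s = Q s := by
  by_cases hV : (P 0).1 = 0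
  · exact exists_walk_eq_of_fst_eq_zero hℓ hP hQ h0 hℓ' hV
  · obtain ⟨s, hs0, hsℓ, hs⟩ := exists_walk_eq_of_fst_eq_zero hℓ (P := GVertex.swap ∘ P)
      (Q := GVertex.swap ∘ Q) (fun t ht => (hP t ht).swap) (fun t ht => (hQ t ht).swap)
      (by simp [h0]) (by simp [hℓ']) (by simp [GVertex.swap, Fin.eq_one_of_ne_zero _ hV])
    exact ⟨s, hs0, hsℓ, swap_involutive.injective hs⟩

end Walk

end GEdge

theorem stmt_19_general (ℓ m : ℕ) (hℓ : 2 ≤ ℓ)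
    (p q : Fin (ℓ + 1) → Fin 2 × Fin (ℓ - 1) × Fin m × Fin m)
    (hp : ∀ i : Fin ℓ, GEdge ℓ m (p i.castSucc) (p i.succ))
    (hq : ∀ i : Fin ℓ, GEdge ℓ m (q i.castSucc) (q i.succ))
    (h0 : p 0 = q 0) (hlast : p (Fin.last ℓ) = q (Fin.last ℓ))
    (hdisj : ∀ i j : Fin (ℓ + 1), i ≠ 0 → i ≠ Fin.last ℓ → j ≠ 0 →
      j ≠ Fin.last ℓ → p i ≠ q j) : False := by
  obtain ⟨s, hs0, hsℓ, hs⟩ := GEdge.exists_walk_eq (P := fun t => p (Fin.ofNat (ℓ + 1) t))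
    (Q := fun t => q (Fin.ofNat (ℓ + 1) t)) hℓ (Fin.ofNat_rel_succ hp) (Fin.ofNat_rel_succ hq)
    (by simpa using h0) (by simpa using hlast)
  have hs_val : (Fin.ofNat (ℓ + 1) s : ℕ) = s := Nat.mod_eq_of_lt (by omega)
  have hs0' : Fin.ofNat (ℓ + 1) s ≠ 0 := by
    simp only [ne_eq, Fin.ext_iff, hs_val, Fin.val_zero]; omega
  have hsℓ' : Fin.ofNat (ℓ + 1) s ≠ Fin.last ℓ := by
    simp only [ne_eq, Fin.ext_iff, hs_val, Fin.val_last]; omega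
  exact hdisj _ _ hs0' hsℓ' hs0' hsℓ' hs

/-- The digraph `G_{ℓ,m}` (`ℓ ≥ 2`, `m ≥ 1`) contains no copy of `C_{ℓ,ℓ}`:
there are no two internally disjoint directed paths of length `ℓ` with the
same initial vertex and the same terminal vertex. -/
theorem stmt_19 (ℓ m : ℕ) (hℓ : 2 ≤ ℓ) (hm : 1 ≤ m)
    (p q : Fin (ℓ + 1) → Fin 2 × Fin (ℓ - 1) × Fin m × Fin m)
    (hp : ∀ i : Fin ℓ, GEdge ℓ m (p i.castSucc) (p i.succ))
    (hq : ∀ i : Fin ℓ, GEdge ℓ m (q i.castSucc) (q i.succ))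
    (hpinj : Function.Injective p) (hqinj : Function.Injective q)
    (h0 : p 0 = q 0) (hlast : p (Fin.last ℓ) = q (Fin.last ℓ))
    (hdisj : ∀ i j : Fin (ℓ + 1), i ≠ 0 → i ≠ Fin.last ℓ → j ≠ 0 →
      j ≠ Fin.last ℓ → p i ≠ q j) : False :=
  stmt_19_general ℓ m hℓ p q hp hq h0 hlast hdisj
end
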